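/- arXiv:2202.01567 — 2 statements merged into one kernel-verified Lean document; each statement's English description precedes it below -/
import Mathlib

section
/- For the two-bamboo discrete BGT instance with growth rates h_1 = 1−ε and h_2 = ε, where 0 < ε ≤ 1/2, the optimal maximum height equals 2(1−ε). -/
def lastCut {n : ℕ} (S : ℕ → Fin n) (i : Fin n) (t : ℕ) : ℕ :=
  ((Finset.range t).filter (fun s => S s = i)).sup id

noncomputable def bgtHeight {n : ℕ} (h : Fin n → ℝ) (S : ℕ → Fin n) (i : Fin n) (t : ℕ) : ℝ :=
  h i * ((t : ℝ) - (lastCut S i t : ℝ))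

/-!
Cutting bamboo `i` in round-robin order over `n` bamboos keeps its height below `n * h i`; for
two bamboos this gives `2 (1 - ε)`. Conversely, keeping the fast bamboo strictly below
`2 (1 - ε)` forces it to be cut on every day after day `0`, so the slow bamboo is never cut
again and grows without bound.
-/

section LastCut

variable {n : ℕ} (S : ℕ → Fin n) (i : Fin n)

lemma le_lastCut {s t : ℕ} (hst : s < t) (hs : S s = i) : s ≤ lastCut S i t :=
  Finset.le_sup (f := id) (Finset.mem_filter.mpr ⟨Finset.mem_range.mpr hst, hs⟩)

-- `lastCut` is `0` when bamboo `i` has not been cut before `t`, so only a positive value is a cut.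
lemma lastCut_lt_and_eq_of_pos {t : ℕ} (hpos : 0 < lastCut S i t) :
    lastCut S i t < t ∧ S (lastCut S i t) = i := by
  have hne : ((Finset.range t).filter (fun s => S s = i)).Nonempty :=
    Finset.nonempty_iff_ne_empty.mpr fun h => by simp [lastCut, h] at hpos
  obtain ⟨s, hs, hsup⟩ := Finset.exists_mem_eq_sup _ hne id
  rw [Finset.mem_filter, Finset.mem_range] at hs
  rwa [lastCut, hsup]

lemma lastCut_eq_zero_of_forall_ne (hS : ∀ s, 0 < s → S s ≠ i) (t : ℕ) :
    lastCut S i t = 0 := by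
  by_contra h
  exact hS _ (Nat.pos_of_ne_zero h) (lastCut_lt_and_eq_of_pos S i (Nat.pos_of_ne_zero h)).2

end LastCut

section Height

variable {n : ℕ} (h : Fin n → ℝ) (S : ℕ → Fin n) (i : Fin n)

lemma bgtHeight_eq_of_forall_ne (hS : ∀ s, 0 < s → S s ≠ i) (t : ℕ) :
    bgtHeight h S i t = h i * t := by
  simp [bgtHeight, lastCut_eq_zero_of_forall_ne S i hS]

lemma not_bddAbove_bgtHeight_of_forall_ne (hi : 0 < h i) (hS : ∀ s, 0 < s → S s ≠ i) :
    ¬ BddAbove (Set.range (bgtHeight h S i)) := by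
  rintro ⟨M, hM⟩
  obtain ⟨t, ht⟩ := exists_nat_gt (M / h i)
  have hle : h i * t ≤ M := bgtHeight_eq_of_forall_ne h S i hS t ▸ hM ⟨t, rfl⟩
  rw [div_lt_iff₀ hi] at ht
  linarith

-- If bamboo `i` were skipped on day `s > 0`, it would have grown for two days at time `s + 1`.
lemma eq_of_bgtHeight_lt_two_mul (hi : 0 ≤ h i) (hM : ∀ t, bgtHeight h S i t < 2 * h i)
    {s : ℕ} (hs : 0 < s) : S s = i := by
  have hgap : ((s + 1 : ℕ) : ℝ) - lastCut S i (s + 1) < 2 :=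
    lt_of_mul_lt_mul_left ((hM (s + 1)).trans_eq (mul_comm _ _)) hi
  have hlast : s ≤ lastCut S i (s + 1) := by
    have : (s : ℝ) < lastCut S i (s + 1) + 1 := by push_cast at hgap; linarith
    exact Nat.lt_succ_iff.mp (by exact_mod_cast this)
  obtain ⟨hlt, hcut⟩ := lastCut_lt_and_eq_of_pos S i (hs.trans_le hlast)
  rwa [le_antisymm (Nat.lt_succ_iff.mp hlt) hlast] at hcut

end Height

section RoundRobin

variable (n : ℕ) [NeZero n]

def roundRobin (t : ℕ) : Fin n := Fin.ofNat n t

-- The last visit of `i` before `t` is `i + n * ⌊(t - 1 - i) / n⌋`.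
lemma le_lastCut_roundRobin_add (i : Fin n) (t : ℕ) : t ≤ lastCut (roundRobin n) i t + n := by
  by_cases hti : t ≤ i
  · exact hti.trans (i.isLt.le.trans (Nat.le_add_left n _))
  have hn : 0 < n := Nat.pos_of_ne_zero (NeZero.ne n)
  have hlo : t - 1 - i < n * ((t - 1 - i) / n) + n := by
    simpa [mul_add] using Nat.lt_mul_div_succ (t - 1 - i) hn
  have hhi := Nat.mul_div_le (t - 1 - i) n
  have hcut : roundRobin n (i + n * ((t - 1 - i) / n)) = i := by
    ext
    simp [roundRobin, Nat.mod_eq_of_lt i.isLt]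
  have := le_lastCut (roundRobin n) i (t := t) (by omega) hcut
  omega

lemma bgtHeight_roundRobin_le (h : Fin n → ℝ) (i : Fin n) (hi : 0 ≤ h i) (t : ℕ) :
    bgtHeight h (roundRobin n) i t ≤ n * h i := by
  have hgap : (t : ℝ) - lastCut (roundRobin n) i t ≤ n := by
    have : (t : ℝ) ≤ lastCut (roundRobin n) i t + n := by
      exact_mod_cast le_lastCut_roundRobin_add n i t
    linarith
  rw [bgtHeight, mul_comm (n : ℝ)]
  exact mul_le_mul_of_nonneg_left hgap hi

end RoundRobin

/-- For the two-bamboo instance `(1-ε, ε)` with `0 < ε ≤ 1/2`,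
the optimal maximum height equals `2(1-ε)`. -/
theorem bgt_two_bamboos_opt (ε : ℝ) (hε0 : 0 < ε) (hε : ε ≤ 1/2) :
    sInf {M : ℝ | ∃ S : ℕ → Fin 2,
        ∀ (i : Fin 2) (t : ℕ), bgtHeight ![1 - ε, ε] S i t ≤ M} = 2 * (1 - ε) := by
  set h : Fin 2 → ℝ := ![1 - ε, ε]
  have hh : ∀ i, 0 ≤ h i ∧ h i ≤ 1 - ε := by
    intro i
    refine ⟨?_, ?_⟩ <;> fin_cases i <;> simp [h] <;> linarith
  refine IsLeast.csInf_eq ⟨⟨roundRobin 2, fun i t => ?_⟩, ?_⟩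
  · calc bgtHeight h (roundRobin 2) i t
        ≤ (2 : ℕ) * h i := bgtHeight_roundRobin_le 2 h i (hh i).1 t
      _ ≤ 2 * (1 - ε) := by push_cast; linarith [(hh i).2]
  rintro M ⟨S, hS⟩
  by_contra! hM
  have hfast : ∀ s, 0 < s → S s = 0 := fun s hs =>
    eq_of_bgtHeight_lt_two_mul h S 0 (hh 0).1 (fun t => (hS 0 t).trans_lt hM) hs
  exact not_bddAbove_bgtHeight_of_forall_ne h S 1 hε0 (fun s hs => by simp [hfast s hs])
    ⟨M, Set.forall_mem_range.mpr (hS 1)⟩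
end

section
/- Let I be an instance of discrete BGT with growth rates h_i and total H, let δ > 0, and let ⟨f_1,...,f_n⟩ be a feasible Pinwheel instance with f_i ≤ (1+δ)H/h_i for all i. Then any feasible Pinwheel schedule for ⟨f_1,...,f_n⟩, used as a BGT schedule for I, keeps every bamboo's height at most (1+δ)H at all times; hence it is a (1+δ)·(H/OPT(I)) ≤ (1+δ)-approximation schedule. -/
def PinSched {n : ℕ} (f : Fin n → ℕ) (S : ℕ → Fin n) : Prop :=
  ∀ (i : Fin n) (t : ℕ), ∃ s, t ≤ s ∧ s < t + f i ∧ S s = i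

/-!
A Pinwheel schedule cuts `bᵢ` in every window of `fᵢ` days, so the height of `bᵢ` never
exceeds `hᵢ fᵢ ≤ (1 + δ) H`.

For the lower bound, let `Φ t` be the total height at time `t`. Cutting `b_{S t}` on day `t`
gives `Φ (t + 1) = Φ t + H - height_{S t} t`. If every height stays below `H`, then, since
the heights of `bᵢ` are multiples of `hᵢ`, they stay below `H - ε` for a fixed `ε > 0`; so
`Φ` grows by at least `ε` per day, while it is bounded by `n H`.
-/

open Finset

variable {n : ℕ}

section lastCut

variable (S : ℕ → Fin n) (i : Fin n)

lemma lastCut_le (t : ℕ) : lastCut S i t ≤ t :=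
  Finset.sup_le fun _ hs => (mem_range.1 (mem_filter.1 hs).1).le

@[simp]
lemma lastCut_zero : lastCut S i 0 = 0 := rfl

lemma lastCut_succ (t : ℕ) :
    lastCut S i (t + 1) = if S t = i then t else lastCut S i t := by
  unfold lastCut
  rw [range_add_one, filter_insert]
  split_ifs
  · rw [sup_insert, id, sup_eq_left]
    exact lastCut_le S i t
  · rfl

end lastCut

section bgtHeight

variable (h : Fin n → ℝ) (S : ℕ → Fin n)

lemma bgtHeight_eq_mul_natCast (i : Fin n) (t : ℕ) :
    bgtHeight h S i t = h i * ((t - lastCut S i t : ℕ) : ℝ) := by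
  rw [bgtHeight, Nat.cast_sub (lastCut_le S i t)]

lemma bgtHeight_succ (i : Fin n) (t : ℕ) :
    bgtHeight h S i (t + 1) =
      bgtHeight h S i t + h i - if S t = i then bgtHeight h S i t else 0 := by
  simp only [bgtHeight, lastCut_succ]
  split_ifs <;> push_cast <;> ring

lemma sum_bgtHeight_succ (t : ℕ) :
    ∑ i, bgtHeight h S i (t + 1) =
      ∑ i, bgtHeight h S i t + (∑ i, h i - bgtHeight h S (S t) t) := by
  simp only [bgtHeight_succ, sum_sub_distrib, sum_add_distrib, sum_ite_eq, mem_univ, if_true]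
  ring

end bgtHeight

lemma PinSched.sub_lastCut_le {f : Fin n → ℕ} {S : ℕ → Fin n} (hS : PinSched f S)
    (i : Fin n) (t : ℕ) : t - lastCut S i t ≤ f i := by
  rcases le_or_gt t (f i) with hle | hlt
  · omega
  obtain ⟨s, hts, hst, hSs⟩ := hS i (t - f i)
  have hs : s ∈ (range t).filter (fun s => S s = i) :=
    mem_filter.2 ⟨mem_range.2 (by omega), hSs⟩
  have : s ≤ lastCut S i t := le_sup (f := id) hs
  omega

lemma PinSched.bgtHeight_le {f : Fin n → ℕ} {S : ℕ → Fin n} (hS : PinSched f S)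
    {h : Fin n → ℝ} {i : Fin n} (hi : 0 ≤ h i) (t : ℕ) : bgtHeight h S i t ≤ h i * f i := by
  rw [bgtHeight_eq_mul_natCast]
  gcongr
  exact hS.sub_lastCut_le i t

lemma exists_pos_forall_mul_natCast_lt_imp_add_le {a c : ℝ} (ha : 0 < a) (hc : 0 < c) :
    ∃ ε > 0, ∀ k : ℕ, a * k < c → a * k + ε ≤ c := by
  set m := ⌈c / a⌉₊ - 1
  have hceil : 0 < ⌈c / a⌉₊ := Nat.ceil_pos.2 (div_pos hc ha)
  have hm : a * m < c := by
    rw [← lt_div_iff₀' ha, ← Nat.lt_ceil]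
    omega
  refine ⟨c - a * m, by linarith, fun k hk => ?_⟩
  have hkm : k ≤ m := by
    rw [← lt_div_iff₀' ha, ← Nat.lt_ceil] at hk
    omega
  have : a * k ≤ a * m := by gcongr
  linarith

lemma natCast_mul_le_sum_bgtHeight {h : Fin n → ℝ} {S : ℕ → Fin n} {ε : ℝ}
    (hε : ∀ i t, bgtHeight h S i t + ε ≤ ∑ j, h j) (t : ℕ) :
    t * ε ≤ ∑ i, bgtHeight h S i t := by
  induction t with
  | zero => simp [bgtHeight]
  | succ t ih =>
    rw [sum_bgtHeight_succ]
    have := hε (S t) t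
    push_cast
    linarith

theorem not_forall_bgtHeight_lt_sum {h : Fin n → ℝ} (hpos : ∀ i, 0 < h i)
    (S : ℕ → Fin n) : ¬ ∀ i t, bgtHeight h S i t < ∑ j, h j := by
  intro hlt
  have : Nonempty (Fin n) := ⟨S 0⟩
  have hH : 0 < ∑ j, h j := sum_pos (fun i _ => hpos i) univ_nonempty
  choose ε hεpos hε using fun i => exists_pos_forall_mul_natCast_lt_imp_add_le (hpos i) hH
  obtain ⟨i₀, hi₀⟩ := Finite.exists_min ε
  have hgap : ∀ i t, bgtHeight h S i t + ε i₀ ≤ ∑ j, h j := fun i t => by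
    have hit := hlt i t
    rw [bgtHeight_eq_mul_natCast] at hit ⊢
    linarith [hε i _ hit, hi₀ i]
  obtain ⟨t, ht⟩ := exists_nat_gt (n * (∑ j, h j) / ε i₀)
  have hsum : ∑ i, bgtHeight h S i t ≤ n * ∑ j, h j := by
    simpa using sum_le_sum fun i (_ : i ∈ univ) => (hlt i t).le
  have := natCast_mul_le_sum_bgtHeight hgap t
  rw [div_lt_iff₀ (hεpos i₀)] at ht
  linarith

theorem bgt_pinwheel_reduction_general (n : ℕ) (h : Fin n → ℝ) (hpos : ∀ i, 0 < h i)
    (δ : ℝ) (f : Fin n → ℕ)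
    (hfle : ∀ i, (f i : ℝ) ≤ (1 + δ) * (∑ j, h j) / h i)
    (S : ℕ → Fin n) (hS : PinSched f S) :
    (∀ (i : Fin n) (t : ℕ), bgtHeight h S i t ≤ (1 + δ) * ∑ j, h j) ∧
    (∀ S' : ℕ → Fin n, ¬ (∀ (i : Fin n) (t : ℕ), bgtHeight h S' i t < ∑ j, h j)) := by
  refine ⟨fun i t => ?_, not_forall_bgtHeight_lt_sum hpos⟩
  calc bgtHeight h S i t ≤ h i * f i := hS.bgtHeight_le (hpos i).le t
    _ ≤ h i * ((1 + δ) * (∑ j, h j) / h i) := mul_le_mul_of_nonneg_left (hfle i) (hpos i).le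
    _ = (1 + δ) * ∑ j, h j := mul_div_cancel₀ _ (hpos i).ne'

/-- Lemma (reduction from Pinwheel): if `f` is a Pinwheel instance with
`fᵢ ≤ (1+δ)H/hᵢ` and `S` is a feasible Pinwheel schedule for `f`, then used as a BGT
schedule it keeps every bamboo's height at most `(1+δ)H`; moreover no schedule keeps
all heights below `H`, so `S` is a `(1+δ)`-approximation schedule. -/
theorem bgt_pinwheel_reduction (n : ℕ) (hn : 1 ≤ n) (h : Fin n → ℝ) (hpos : ∀ i, 0 < h i)
    (δ : ℝ) (hδ : 0 < δ) (f : Fin n → ℕ) (hf1 : ∀ i, 1 ≤ f i)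
    (hfle : ∀ i, (f i : ℝ) ≤ (1 + δ) * (∑ j, h j) / h i)
    (S : ℕ → Fin n) (hS : PinSched f S) :
    (∀ (i : Fin n) (t : ℕ), bgtHeight h S i t ≤ (1 + δ) * ∑ j, h j) ∧
    (∀ S' : ℕ → Fin n, ¬ (∀ (i : Fin n) (t : ℕ), bgtHeight h S' i t < ∑ j, h j)) :=
  bgt_pinwheel_reduction_general n h hpos δ f hfle S hS
end
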